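/- arXiv:1610.09270 — 2 statements merged into one kernel-verified Lean document; each statement's English description precedes it below -/
import Mathlib

section
/- For all subsets A, B, C of M: if A ⫝c_C B (C covers A in B) then A ⫝e_C B. -/
open FirstOrder

/-- Covering independence: `A ⫝c_C B` ("`C` covers `A` in `B`") in the `L`-structure `M`. -/
def IndC (L : Language) (M : Type*) [L.Structure M] (A C B : Set M) : Prop :=
  ∀ (k m n : ℕ) (φ : L.Formula (Fin k ⊕ Fin m ⊕ Fin n))
    (a : Fin k → M) (b : Fin m → M) (c : Fin n → M),
    (∀ i, a i ∈ A) → (∀ i, b i ∈ B) → (∀ i, c i ∈ C) →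
    ∃ d : Fin m → M, (∀ i, d i ∈ C) ∧
      (φ.Realize (Sum.elim a (Sum.elim b c)) → φ.Realize (Sum.elim a (Sum.elim d c)))

/-- The model-theoretic algebraic closure of `A` in `M`. -/
def acl (L : Language) (M : Type*) [L.Structure M] (A : Set M) : Set M :=
  {b | ∃ (n : ℕ) (φ : L.Formula (Unit ⊕ Fin n)) (a : Fin n → M),
    (∀ i, a i ∈ A) ∧ φ.Realize (Sum.elim (fun _ => b) a) ∧
    {u : M | φ.Realize (Sum.elim (fun _ => u) a)}.Finite}

/-- Exchange independence: `A ⫝e_C B` iff for every finite tuple `ā` from `A`,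
`A ∩ acl(ā ∪ B ∪ C) ⊆ acl(ā ∪ C)`. -/
def IndE (L : Language) (M : Type*) [L.Structure M] (A C B : Set M) : Prop :=
  ∀ (n : ℕ) (a : Fin n → M), (∀ i, a i ∈ A) →
    A ∩ acl L M (Set.range a ∪ B ∪ C) ⊆ acl L M (Set.range a ∪ C)

/-! If `x ∈ A` is algebraic over `ā ∪ B ∪ C`, witnessed by `φ(x, ē)` having at most `K` solutions
in its first variable, then "`φ(x, ȳ)` holds and `φ(·, ȳ)` has at most `K` solutions" is a formula
satisfied by `ē` over parameters from `A` and `C`. Covering independence moves the coordinates of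
`ē` that lie in `B` but not in `ā ∪ C` into `C` while keeping this formula true, which witnesses
`x ∈ acl(ā ∪ C)`. -/

namespace FirstOrder.Language.Formula

variable {L : Language} {M : Type*} [L.Structure M] {α : Type*}

noncomputable def solutionsCoveredBy (φ : L.Formula (Unit ⊕ α)) (K : ℕ) : L.Formula α :=
  iExs (Fin K) <| iAlls Unit <|
    (φ.relabel (Sum.elim Sum.inr (Sum.inl ∘ Sum.inl))).imp <|
      iSup fun j => Term.equal (Term.var (Sum.inr ())) (Term.var (Sum.inl (Sum.inr j)))

theorem realize_solutionsCoveredBy {φ : L.Formula (Unit ⊕ α)} {K : ℕ} {v : α → M} :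
    (φ.solutionsCoveredBy K).Realize v ↔
      ∃ t : Fin K → M, ∀ u, φ.Realize (Sum.elim (fun _ => u) v) → u ∈ Set.range t := by
  simp only [solutionsCoveredBy, realize_iExs, realize_iAlls, realize_imp, realize_relabel,
    realize_iSup, realize_equal, Term.realize_var, Sum.elim_inl, Sum.elim_inr, Set.mem_range]
  refine exists_congr fun t => ⟨fun h u hu => ?_, fun h u hu => ?_⟩
  · obtain ⟨j, hj⟩ := h (fun _ => u) (by convert hu using 2; ext (_ | _) <;> rfl)
    exact ⟨j, hj.symm⟩
  · obtain ⟨j, hj⟩ := h (u ()) (by convert hu using 2; ext (_ | _) <;> rfl)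
    exact ⟨j, hj.symm⟩

end FirstOrder.Language.Formula

section

open FirstOrder.Language Formula

variable {L : Language} {M : Type*} [L.Structure M]

theorem mem_acl_iff_exists_solutionsCoveredBy {S : Set M} {x : M} :
    x ∈ acl L M S ↔ ∃ (n : ℕ) (φ : L.Formula (Unit ⊕ Fin n)) (a : Fin n → M),
      (∀ i, a i ∈ S) ∧ φ.Realize (Sum.elim (fun _ => x) a) ∧
        ∃ K, (φ.solutionsCoveredBy K).Realize a := by
  simp only [realize_solutionsCoveredBy]
  refine exists₃_congr fun n φ a =>
    and_congr_right fun _ => and_congr_right fun _ => ⟨fun hfin => ?_, ?_⟩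
  · obtain ⟨K, t, ht⟩ := hfin.fin_embedding
    exact ⟨K, t, fun u hu => ht ▸ hu⟩
  · rintro ⟨K, t, ht⟩
    exact (Set.finite_range t).subset ht

theorem IndC.exists_of_finite {A C B : Set M} (h : IndC L M A C B) {α β γ : Type*}
    [Finite α] [Finite β] [Finite γ] (φ : L.Formula (α ⊕ β ⊕ γ))
    (a : α → M) (b : β → M) (c : γ → M) (ha : ∀ i, a i ∈ A) (hb : ∀ i, b i ∈ B)
    (hc : ∀ i, c i ∈ C) :
    ∃ d : β → M, (∀ i, d i ∈ C) ∧
      (φ.Realize (Sum.elim a (Sum.elim b c)) → φ.Realize (Sum.elim a (Sum.elim d c))) := by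
  let eα := Finite.equivFin α
  let eβ := Finite.equivFin β
  let eγ := Finite.equivFin γ
  obtain ⟨d, hdC, hd⟩ := h _ _ _ (φ.relabel (Sum.map eα (Sum.map eβ eγ)))
    (a ∘ eα.symm) (b ∘ eβ.symm) (c ∘ eγ.symm) (fun _ => ha _) (fun _ => hb _) (fun _ => hc _)
  refine ⟨d ∘ eβ, fun _ => hdC _, fun hφ => ?_⟩
  simpa [realize_relabel, Sum.elim_comp_map, Function.comp_assoc] using hd (by
    simpa [realize_relabel, Sum.elim_comp_map, Function.comp_assoc] using hφ)

theorem IndC.exists_realize_eqOn_compl {A C B : Set M} (h : IndC L M A C B) {ι : Type*}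
    [Finite ι] (φ : L.Formula ι) (v : ι → M) (s : Set ι) (hs : Set.MapsTo v s B)
    (hsc : Set.MapsTo v sᶜ (A ∪ C)) :
    ∃ w : ι → M, Set.MapsTo w s C ∧ Set.EqOn w v sᶜ ∧ (φ.Realize v → φ.Realize w) := by
  classical
  let split : ι → {i // i ∉ s ∧ v i ∈ A} ⊕ s ⊕ {i // i ∉ s ∧ v i ∉ A} := fun i =>
    if hi : i ∈ s then Sum.inr (Sum.inl ⟨i, hi⟩)
    else if hA : v i ∈ A then Sum.inl ⟨i, hi, hA⟩ else Sum.inr (Sum.inr ⟨i, hi, hA⟩)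
  let merge (d : s → M) : ι → M :=
    Sum.elim (fun j => v j.1) (Sum.elim d (fun j => v j.1)) ∘ split
  have merge_of_mem (d : s → M) {i} (hi : i ∈ s) : merge d i = d ⟨i, hi⟩ := by
    simp [merge, split, hi]
  have merge_of_notMem (d : s → M) {i} (hi : i ∉ s) : merge d i = v i := by
    by_cases hA : v i ∈ A <;> simp [merge, split, hi, hA]
  have merge_restrict : merge (fun j => v j.1) = v := by
    funext i
    by_cases hi : i ∈ s
    · exact merge_of_mem _ hi
    · exact merge_of_notMem _ hi
  obtain ⟨d, hdC, hd⟩ := h.exists_of_finite (φ.relabel split) _ (fun j => v j.1) _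
    (fun j => j.2.2) (fun j => hs j.2) (fun j => (hsc j.2.1).resolve_left j.2.2)
  refine ⟨merge d, fun i hi => ?_, fun i hi => merge_of_notMem d hi, fun hφ => ?_⟩
  · rw [merge_of_mem d hi]
    exact hdC _
  · rw [← merge_restrict, ← realize_relabel] at hφ
    exact realize_relabel.1 (hd hφ)

end

theorem stmt15 (L : Language) (M : Type*) [L.Structure M] :
    ∀ A C B : Set M, IndC L M A C B → IndE L M A C B := by
  intro A C B hcov n a ha x ⟨hxA, hx⟩
  obtain ⟨N, φ, e, he, hφ, K, hK⟩ := mem_acl_iff_exists_solutionsCoveredBy.1 hx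
  let s : Set (Unit ⊕ Fin N) := Sum.inr '' {i | e i ∉ Set.range a ∪ C}
  have mem_s (i : Fin N) : Sum.inr i ∈ s ↔ e i ∉ Set.range a ∪ C :=
    Sum.inr_injective.mem_set_image
  have mapsTo_s : Set.MapsTo (Sum.elim (fun _ => x) e) s B := by
    rintro _ ⟨i, hi, rfl⟩
    exact ((he i).resolve_right fun h => hi (Or.inr h)).resolve_left fun h => hi (Or.inl h)
  have mapsTo_compl : Set.MapsTo (Sum.elim (fun _ => x) e) sᶜ (A ∪ C) := by
    rintro (_ | i) hi
    · exact Or.inl hxA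
    · obtain ⟨j, hj⟩ | hiC := not_not.1 ((mem_s i).not.1 hi)
      exacts [Or.inl (show e i ∈ A from hj ▸ ha j), Or.inr hiC]
  obtain ⟨w, hwC, hwe, hw⟩ := hcov.exists_realize_eqOn_compl
    (φ ⊓ (φ.solutionsCoveredBy K).relabel Sum.inr) _ s mapsTo_s mapsTo_compl
  have hwx : w ∘ Sum.inl = fun _ => x := funext fun _ => hwe (by simp [s])
  rw [← Sum.elim_comp_inl_inr w, hwx] at hw
  simp only [Language.Formula.realize_inf, Language.Formula.realize_relabel,
    Sum.elim_comp_inr] at hw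
  obtain ⟨hwφ, hwK⟩ := hw ⟨hφ, hK⟩
  refine mem_acl_iff_exists_solutionsCoveredBy.2 ⟨N, φ, w ∘ Sum.inr, fun i => ?_, hwφ, K, hwK⟩
  by_cases hi : e i ∈ Set.range a ∪ C
  · have hwi : w (Sum.inr i) = e i := hwe ((mem_s i).not.2 (not_not.2 hi))
    rwa [Function.comp_apply, hwi]
  · exact Or.inr (hwC ((mem_s i).2 hi))
end

section
/- For all countable subsets A, B, C of 𝓛, the set {ω ∈ Ω : A(ω) ⫝e_{C(ω)} B(ω)} is measurable, where ⫝e denotes exchange independence in the structure M. -/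
/-!
Exchange independence at `ω` only quantifies over tuples and elements of `A(ω)`, and these lift to
tuples and elements of the countable set `A`. So the event is a countable intersection of events
`a(ω) ∈ acl(T(ω)) → a(ω) ∈ acl(T'(ω))` with `T, T'` countable subsets of `𝓛`. In turn
`a(ω) ∈ acl(T(ω))` is the countable union, over formulas `φ(u, v̄)` and tuples `t̄` from `T`, of
`⟦φ(a, t̄)⟧ ∩ {ω | φ(M, t̄(ω)) is finite}`, and finiteness is the countable union over `n` of the
complement of the first-order event "`φ(u, t̄)` has `n` distinct solutions".
-/

open FirstOrder

open FirstOrder.Language Set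

theorem Set.finite_iff_exists_forall_not_injective {α : Type*} {s : Set α} :
    s.Finite ↔ ∃ n, ∀ f : Fin n → α, Function.Injective f → ¬ ∀ i, f i ∈ s := by
  constructor
  · intro hs
    have := hs.to_subtype
    refine ⟨Nat.card s + 1, fun f hf hfs => ?_⟩
    have := Nat.card_le_card_of_injective (fun i => (⟨f i, hfs i⟩ : s))
      fun i j hij => hf (congrArg Subtype.val hij)
    simp at this
  · rintro ⟨n, hn⟩
    by_contra hs
    let e := Set.Infinite.natEmbedding s hs
    exact hn (fun i => e i) (fun i j hij => Fin.ext (e.injective (Subtype.ext hij)))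
      fun i => (e i).2

theorem exists_comp_eq_of_forall_mem_image {ι X M : Type*} (e : X → M) {T : Set X}
    {a : ι → M} (ha : ∀ i, a i ∈ e '' T) : ∃ t : ι → T, (fun i => e (t i)) = a := by
  choose t htT hta using ha
  exact ⟨fun i => ⟨t i, htT i⟩, funext hta⟩

namespace FirstOrder.Language.Formula

variable {L : Language} {M : Type*} [L.Structure M] {α : Type*}

noncomputable def existsDistinctSolutions (φ : L.Formula (Unit ⊕ α)) (n : ℕ) : L.Formula α :=
  iExs (Fin n) <|
    (iInf fun i : Fin n => φ.relabel (Sum.elim (fun _ => Sum.inr i) Sum.inl)) ⊓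
      iInf fun p : {p : Fin n × Fin n // p.1 ≠ p.2} =>
        ∼(Term.equal (var (Sum.inr p.1.1)) (var (Sum.inr p.1.2)))

theorem realize_existsDistinctSolutions (φ : L.Formula (Unit ⊕ α)) (n : ℕ) (v : α → M) :
    (φ.existsDistinctSolutions n).Realize v ↔
      ∃ xs : Fin n → M, Function.Injective xs ∧ ∀ i, φ.Realize (Sum.elim (fun _ => xs i) v) := by
  simp only [existsDistinctSolutions, realize_iExs, realize_inf, realize_iInf, realize_relabel,
    realize_not, realize_equal, Term.realize_var, Sum.elim_inr]
  refine exists_congr fun xs => ?_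
  rw [and_comm]
  refine and_congr ?_ (forall_congr' fun i => ?_)
  · simp only [Subtype.forall, Prod.forall, Function.Injective]
    exact forall₂_congr fun i j => by tauto
  · rw [Sum.comp_elim, Sum.elim_comp_inl]
    rfl

theorem finite_setOf_realize_iff (φ : L.Formula (Unit ⊕ α)) (v : α → M) :
    {u : M | φ.Realize (Sum.elim (fun _ => u) v)}.Finite ↔
      ∃ n, ¬ (φ.existsDistinctSolutions n).Realize v := by
  simp only [Set.finite_iff_exists_forall_not_injective, realize_existsDistinctSolutions,
    mem_ofPred_eq, not_exists, not_and]

end FirstOrder.Language.Formula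

section ImageOfParameters

variable {L : Language} {M : Type*} [L.Structure M] {X : Type*} (e : X → M)

theorem mem_acl_image_iff (T : Set X) (b : M) :
    b ∈ acl L M (e '' T) ↔ ∃ (n : ℕ) (φ : L.Formula (Unit ⊕ Fin n)) (t : Fin n → T),
      φ.Realize (Sum.elim (fun _ => b) fun i => e (t i)) ∧
        {u : M | φ.Realize (Sum.elim (fun _ => u) fun i => e (t i))}.Finite := by
  constructor
  · rintro ⟨n, φ, a, ha, hb, hfin⟩
    obtain ⟨t, rfl⟩ := exists_comp_eq_of_forall_mem_image e ha
    exact ⟨n, φ, t, hb, hfin⟩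
  · rintro ⟨n, φ, t, hb, hfin⟩
    exact ⟨n, φ, fun i => e (t i), fun i => mem_image_of_mem e (t i).2, hb, hfin⟩

theorem indE_image_iff (A B C : Set X) :
    IndE L M (e '' A) (e '' C) (e '' B) ↔ ∀ (n : ℕ) (f : Fin n → A) (x : A),
      e x ∈ acl L M (e '' (range (fun i => (f i : X)) ∪ B ∪ C)) →
        e x ∈ acl L M (e '' (range (fun i => (f i : X)) ∪ C)) := by
  simp only [image_union, ← range_comp]
  constructor
  · intro h n f x hx
    exact h n _ (fun i => mem_image_of_mem e (f i).2) ⟨mem_image_of_mem e x.2, hx⟩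
  · rintro h n a ha _ ⟨⟨x, hxA, rfl⟩, hx⟩
    obtain ⟨f, rfl⟩ := exists_comp_eq_of_forall_mem_image e ha
    exact h n f ⟨x, hxA⟩ hx

end ImageOfParameters

section Randomization

variable {M : Type*} {Ω : Type*} [MeasurableSpace Ω]

def EventsMeasurable (L : Language) [L.Structure M] (𝓛 : Set (Ω → M)) : Prop :=
  ∀ (n : ℕ) (φ : L.Formula (Fin n)) (a : Fin n → Ω → M),
    (∀ i, a i ∈ 𝓛) → MeasurableSet {ω : Ω | φ.Realize (fun i => a i ω)}

namespace EventsMeasurable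

variable {L : Language} [L.Structure M] {𝓛 : Set (Ω → M)} {α : Type*} [Finite α]

theorem measurableSet_realize (h𝓛 : EventsMeasurable L 𝓛) (φ : L.Formula α)
    {a : α → Ω → M} (ha : ∀ i, a i ∈ 𝓛) : MeasurableSet {ω | φ.Realize fun i => a i ω} := by
  obtain ⟨n, ⟨e⟩⟩ := Finite.exists_equiv_fin α
  simpa [Formula.realize_relabel, Function.comp_def] using
    h𝓛 n (φ.relabel e) (fun j => a (e.symm j)) fun j => ha _

theorem measurableSet_finite_setOf_realize (h𝓛 : EventsMeasurable L 𝓛)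
    (φ : L.Formula (Unit ⊕ α)) {a : α → Ω → M} (ha : ∀ i, a i ∈ 𝓛) :
    MeasurableSet {ω | {u : M | φ.Realize (Sum.elim (fun _ => u) fun i => a i ω)}.Finite} := by
  simp only [Formula.finite_setOf_realize_iff, ofPred_exists]
  exact .iUnion fun n => (h𝓛.measurableSet_realize _ ha).compl

theorem measurableSet_mem_acl [Countable L.Symbols] (h𝓛 : EventsMeasurable L 𝓛) {g : Ω → M}
    (hg : g ∈ 𝓛) {T : Set (Ω → M)} (hT : T ⊆ 𝓛) (hTc : T.Countable) :
    MeasurableSet {ω | g ω ∈ acl L M ((fun f => f ω) '' T)} := by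
  have := hTc.to_subtype
  simp only [mem_acl_image_iff, ofPred_exists, ofPred_and]
  refine .iUnion fun n => .iUnion fun φ => .iUnion fun t => .inter ?_
    (h𝓛.measurableSet_finite_setOf_realize φ fun i => hT (t i).2)
  have := h𝓛.measurableSet_realize φ (a := Sum.elim (fun _ => g) fun i => (t i : Ω → M))
    (Sum.forall.2 ⟨fun _ => hg, fun i => hT (t i).2⟩)
  convert this using 4 with ω
  exact (Sum.comp_elim (fun f : Ω → M => f ω) _ _).symm

end EventsMeasurable

end Randomization

theorem stmt18 (L : Language) [Countable L.Symbols] (M : Type*) [L.Structure M]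
    (Ω : Type*) [MeasurableSpace Ω] (𝓛 : Set (Ω → M))
    (hmeas : ∀ (n : ℕ) (φ : L.Formula (Fin n)) (a : Fin n → Ω → M),
      (∀ i, a i ∈ 𝓛) → MeasurableSet {ω : Ω | φ.Realize (fun i => a i ω)}) :
    ∀ A B C : Set (Ω → M), A ⊆ 𝓛 → B ⊆ 𝓛 → C ⊆ 𝓛 →
      A.Countable → B.Countable → C.Countable →
      MeasurableSet {ω : Ω |
        IndE L M ((fun f => f ω) '' A) ((fun f => f ω) '' C) ((fun f => f ω) '' B)} := by
  intro A B C hA hB hC hAc hBc hCc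
  have := hAc.to_subtype
  have h𝓛 : EventsMeasurable L 𝓛 := hmeas
  simp only [indE_image_iff, ofPred_forall]
  refine .iInter fun n => .iInter fun f => .iInter fun x => .imp ?_ ?_
  · exact h𝓛.measurableSet_mem_acl (hA x.2)
      (union_subset (union_subset (range_subset_iff.2 fun i => hA (f i).2) hB) hC)
      (((countable_range _).union hBc).union hCc)
  · exact h𝓛.measurableSet_mem_acl (hA x.2)
      (union_subset (range_subset_iff.2 fun i => hA (f i).2) hC) ((countable_range _).union hCc)
end
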